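/- arXiv:2508.04688 — 2 statements merged into one kernel-verified Lean document; each statement's English description precedes it below -/
import Mathlib

section
/- Let 1 < r < 2 and let m, M > 0. Suppose G : ℝ² → ℝ² is continuous, strictly monotone, satisfies G(λξ) = |λ|^{r-2}λ G(ξ) for all λ ∈ ℝ, ξ ∈ ℝ², and m|ξ|^{r-1} ≤ |G(ξ)| ≤ M|ξ|^{r-1}. Then G is surjective onto ℝ², hence bijective, and its inverse G⁻¹ satisfies the homogeneity G⁻¹(λη) = |λ|^{r'-2}λ G⁻¹(η) for all λ ∈ ℝ, η ∈ ℝ², where r' = r/(r-1). -/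
open Real RealInnerProductSpace

/-!
Strict monotonicity makes `G` injective, so `G` does not vanish off the origin. Given `η ≠ 0`,
the cross product `η × G(cos θ, sin θ)` changes sign between `θ` and `θ + π` because `G` is odd,
so by the intermediate value theorem `G` maps some unit vector to a nonzero multiple of `η`;
oddness makes the multiple positive, and rescaling by the homogeneity hits `η` itself.
The signed powers `λ ↦ |λ|^(d-1) λ` compose by multiplying degrees, so the inverse of a
bijection homogeneous of degree `r - 1` is homogeneous of degree `(r - 1)⁻¹ = r' - 1`.
-/

open Function

noncomputable def signedRpow (d l : ℝ) : ℝ := |l| ^ (d - 1) * l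

@[simp] lemma signedRpow_zero_right (d : ℝ) : signedRpow d 0 = 0 := by
  simp [signedRpow]

lemma abs_signedRpow (d : ℝ) {l : ℝ} (hl : l ≠ 0) : |signedRpow d l| = |l| ^ d := by
  rw [signedRpow, abs_mul, abs_of_nonneg (by positivity), ← rpow_add_one (abs_ne_zero.2 hl),
    sub_add_cancel]

lemma signedRpow_of_pos (d : ℝ) {t : ℝ} (ht : 0 < t) : signedRpow d t = t ^ d := by
  rw [signedRpow, abs_of_pos ht, ← rpow_add_one ht.ne', sub_add_cancel]

@[simp] lemma signedRpow_neg_one (d : ℝ) : signedRpow d (-1) = -1 := by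
  simp [signedRpow]

@[simp] lemma signedRpow_one_left (l : ℝ) : signedRpow 1 l = l := by
  simp [signedRpow]

lemma signedRpow_signedRpow (a b l : ℝ) :
    signedRpow a (signedRpow b l) = signedRpow (a * b) l := by
  rcases eq_or_ne l 0 with rfl | hl
  · simp
  rw [signedRpow, abs_signedRpow b hl, ← rpow_mul (abs_nonneg l), signedRpow, signedRpow,
    ← mul_assoc, ← rpow_add (abs_pos.2 hl)]
  ring_nf

def OddHomogeneous {E F : Type*} [SMul ℝ E] [SMul ℝ F] (d : ℝ) (G : E → F) : Prop :=
  ∀ (l : ℝ) (x : E), G (l • x) = signedRpow d l • G x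

namespace OddHomogeneous

variable {E F : Type*} [AddCommGroup E] [Module ℝ E] [AddCommGroup F] [Module ℝ F]
  {d : ℝ} {G : E → F}

lemma map_zero (hG : OddHomogeneous d G) : G 0 = 0 := by
  simpa using hG 0 0

lemma map_neg (hG : OddHomogeneous d G) (x : E) : G (-x) = -G x := by
  simpa using hG (-1) x

lemma map_pos_smul (hG : OddHomogeneous d G) {t : ℝ} (ht : 0 < t) (x : E) :
    G (t • x) = t ^ d • G x := by
  rw [hG, signedRpow_of_pos d ht]

lemma surjective_of_forall_exists_pos_smul_mem_range (hG : OddHomogeneous d G) (hd : d ≠ 0)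
    (hray : ∀ η ≠ 0, ∃ x, ∃ t : ℝ, 0 < t ∧ G x = t • η) : Surjective G := by
  intro η
  rcases eq_or_ne η 0 with rfl | hη
  · exact ⟨0, hG.map_zero⟩
  obtain ⟨x, t, ht, hx⟩ := hray η hη
  refine ⟨t⁻¹ ^ d⁻¹ • x, ?_⟩
  rw [hG.map_pos_smul (by positivity), hx, smul_smul, ← rpow_mul (inv_pos.2 ht).le,
    inv_mul_cancel₀ hd, rpow_one, inv_mul_cancel₀ ht.ne', one_smul]

lemma invFun (hG : OddHomogeneous d G) (hd : d ≠ 0) (hbij : Bijective G) :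
    OddHomogeneous d⁻¹ (Function.invFun G) := by
  intro l η
  apply hbij.injective
  rw [invFun_eq (hbij.surjective _), hG, invFun_eq (hbij.surjective _), signedRpow_signedRpow,
    mul_inv_cancel₀ hd, signedRpow_one_left]

end OddHomogeneous

lemma injective_of_inner_sub_pos {E : Type*} [NormedAddCommGroup E] [InnerProductSpace ℝ E]
    {G : E → E} (hmono : ∀ x y, x ≠ y → 0 < ⟪G x - G y, x - y⟫) : Injective G := by
  intro x y h
  by_contra hxy
  simpa [h] using hmono x y hxy

lemma Function.Antiperiodic.exists_eq_zero {f : ℝ → ℝ} {c : ℝ} (hf : Antiperiodic f c)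
    (hcont : Continuous f) : ∃ x, f x = 0 := by
  have : (0 : ℝ) ∈ Set.uIcc (f 0) (f c) := by
    rw [hf.eq, Set.mem_uIcc]
    rcases le_total (f 0) 0 with h | h
    · exact Or.inl ⟨h, by linarith⟩
    · exact Or.inr ⟨by linarith, h⟩
  obtain ⟨x, -, hx⟩ := intermediate_value_uIcc hcont.continuousOn this
  exact ⟨x, hx⟩

namespace EuclideanSpace

noncomputable def circlePoint (θ : ℝ) : EuclideanSpace ℝ (Fin 2) := !₂[cos θ, sin θ]

lemma continuous_circlePoint : Continuous circlePoint := by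
  refine (PiLp.continuous_toLp 2 _).comp (continuous_pi fun i => ?_)
  fin_cases i
  · exact continuous_cos
  · exact continuous_sin

lemma circlePoint_add_pi (θ : ℝ) : circlePoint (θ + π) = -circlePoint θ := by
  ext i
  fin_cases i <;> simp [circlePoint, cos_add_pi, sin_add_pi]

lemma circlePoint_ne_zero (θ : ℝ) : circlePoint θ ≠ 0 := by
  intro h
  have h0 := congrArg (· 0) h
  have h1 := congrArg (· 1) h
  simp [circlePoint] at h0 h1
  nlinarith [cos_sq_add_sin_sq θ]

lemma exists_eq_smul_of_cross_eq_zero {η v : EuclideanSpace ℝ (Fin 2)} (hη : η ≠ 0)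
    (hcross : η 0 * v 1 - η 1 * v 0 = 0) : ∃ t : ℝ, v = t • η := by
  have hcoord : η 0 ≠ 0 ∨ η 1 ≠ 0 := by
    by_contra! h
    exact hη (by ext i; fin_cases i <;> simp [h.1, h.2])
  rcases hcoord with h | h
  · refine ⟨v 0 / η 0, ?_⟩
    ext i
    fin_cases i
    · simp [div_mul_cancel₀ _ h]
    · simp only [Fin.mk_one, PiLp.smul_apply, smul_eq_mul]
      field_simp
      linarith
  · refine ⟨v 1 / η 1, ?_⟩
    ext i
    fin_cases i
    · simp only [Fin.zero_eta, PiLp.smul_apply, smul_eq_mul]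
      field_simp
      linarith
    · simp [div_mul_cancel₀ _ h]

lemma exists_pos_smul_eq_of_continuous_odd
    {G : EuclideanSpace ℝ (Fin 2) → EuclideanSpace ℝ (Fin 2)} (hcont : Continuous G)
    (hodd : ∀ x, G (-x) = -G x) (hne : ∀ x, x ≠ 0 → G x ≠ 0)
    {η : EuclideanSpace ℝ (Fin 2)} (hη : η ≠ 0) : ∃ x, ∃ t : ℝ, 0 < t ∧ G x = t • η := by
  set w : ℝ → ℝ := fun θ => η 0 * G (circlePoint θ) 1 - η 1 * G (circlePoint θ) 0
  have hw : Antiperiodic w π := fun θ => by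
    simp only [w, circlePoint_add_pi, hodd, PiLp.neg_apply]
    ring
  have hwcont : Continuous w := by
    have hcoord (i : Fin 2) : Continuous fun θ => G (circlePoint θ) i :=
      (PiLp.continuous_apply 2 _ i).comp (hcont.comp continuous_circlePoint)
    exact (continuous_const.mul (hcoord 1)).sub (continuous_const.mul (hcoord 0))
  obtain ⟨θ, hθ⟩ := hw.exists_eq_zero hwcont
  obtain ⟨t, ht⟩ := exists_eq_smul_of_cross_eq_zero hη hθ
  have ht0 : t ≠ 0 := by
    rintro rfl
    exact hne _ (circlePoint_ne_zero θ) (by simpa using ht)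
  rcases ht0.lt_or_gt with hneg | hpos
  · exact ⟨-circlePoint θ, -t, neg_pos.2 hneg, by rw [hodd, ht, neg_smul]⟩
  · exact ⟨circlePoint θ, t, hpos, ht⟩

end EuclideanSpace

theorem drag_bijective_inverse_homogeneous_general (r r' : ℝ)
    (hr1 : 1 < r) (hr' : r' = r / (r - 1))
    (G : EuclideanSpace ℝ (Fin 2) → EuclideanSpace ℝ (Fin 2))
    (hcont : Continuous G)
    (hmono : ∀ ξ τ : EuclideanSpace ℝ (Fin 2), ξ ≠ τ → 0 < ⟪G ξ - G τ, ξ - τ⟫)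
    (hhom : ∀ (l : ℝ) (ξ : EuclideanSpace ℝ (Fin 2)),
      G (l • ξ) = (|l| ^ (r - 2) * l) • G ξ) :
    Function.Surjective G ∧ Function.Bijective G ∧
    ∀ (l : ℝ) (η : EuclideanSpace ℝ (Fin 2)),
      Function.invFun G (l • η) = (|l| ^ (r' - 2) * l) • Function.invFun G η := by
  have hd : r - 1 ≠ 0 := sub_ne_zero.2 hr1.ne'
  have hG : OddHomogeneous (r - 1) G := fun l ξ => by
    rw [hhom, signedRpow, sub_sub, one_add_one_eq_two]
  have hinj : Injective G := injective_of_inner_sub_pos hmono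
  have hsurj : Surjective G :=
    hG.surjective_of_forall_exists_pos_smul_mem_range hd fun _ hη =>
      EuclideanSpace.exists_pos_smul_eq_of_continuous_odd hcont hG.map_neg
        (fun x hx => hG.map_zero ▸ hinj.ne hx) hη
  have hdegree : (r - 1)⁻¹ = r' - 1 := by
    rw [hr']
    field_simp
    ring
  have hinv : OddHomogeneous (r' - 1) (invFun G) := hdegree ▸ hG.invFun hd ⟨hinj, hsurj⟩
  refine ⟨hsurj, ⟨hinj, hsurj⟩, fun l η => ?_⟩
  rw [hinv l η, signedRpow, sub_sub, one_add_one_eq_two]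

/-- A continuous, strictly monotone map `G : ℝ² → ℝ²`, homogeneous of degree `r−1`
and with two-sided coercivity bounds `m|ξ|^{r-1} ≤ |G(ξ)| ≤ M|ξ|^{r-1}`, is
bijective, and its inverse satisfies the homogeneity
`G⁻¹(λη) = |λ|^{r'-2}λ G⁻¹(η)` with `r' = r/(r-1)`. -/
theorem drag_bijective_inverse_homogeneous (r r' m M : ℝ)
    (hr1 : 1 < r) (hr2 : r < 2) (hr' : r' = r / (r - 1))
    (hm : 0 < m) (hM : 0 < M)
    (G : EuclideanSpace ℝ (Fin 2) → EuclideanSpace ℝ (Fin 2))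
    (hcont : Continuous G)
    (hmono : ∀ ξ τ : EuclideanSpace ℝ (Fin 2), ξ ≠ τ → 0 < ⟪G ξ - G τ, ξ - τ⟫)
    (hhom : ∀ (l : ℝ) (ξ : EuclideanSpace ℝ (Fin 2)),
      G (l • ξ) = (|l| ^ (r - 2) * l) • G ξ)
    (hlow : ∀ ξ : EuclideanSpace ℝ (Fin 2), m * ‖ξ‖ ^ (r - 1) ≤ ‖G ξ‖)
    (hup : ∀ ξ : EuclideanSpace ℝ (Fin 2), ‖G ξ‖ ≤ M * ‖ξ‖ ^ (r - 1)) :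
    Function.Surjective G ∧ Function.Bijective G ∧
    ∀ (l : ℝ) (η : EuclideanSpace ℝ (Fin 2)),
      Function.invFun G (l • η) = (|l| ^ (r' - 2) * l) • Function.invFun G η :=
  drag_bijective_inverse_homogeneous_general r r' hr1 hr' G hcont hmono hhom
end

section
/- Let 1 < r < 2, f' ∈ ℝ² a constant vector, and μ > 0. The explicit profile u'(y₃) solving the reduced 1D problem −μ 2^{-r/2} ∂_{y₃}(|∂_{y₃}u'|^{r-2}∂_{y₃}u') = g on (0,1) with u'(0) = u'(1) = 0 and constant right-hand side g ∈ ℝ², satisfies ∫₀¹ u'(y₃) dy₃ = (1/(2^{r'/2}(r'+1)μ^{r'-1})) |g|^{r'-2} g, where r' = r/(r-1). (This is the derivation of the nonlinear Reynolds average velocity formula (U_Reynolds_super).) -/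
/-!
The flux `‖u'‖^(r-2) • u'` has constant derivative `k = -g / (μ 2^(-r/2))`, hence is affine,
`A + y • k`; inverting `v ↦ ‖v‖^(r-2) • v` by `w ↦ ‖w‖^(r'-2) • w` gives
`u' y = ‖A + y • k‖^(r'-2) • (A + y • k)`. The map `B ↦ ∫₀¹ ‖B + y • k‖^(r'-2) • (B + y • k)` is
injective, because `w ↦ ‖w‖^(r'-2) • w` is strictly monotone, and the reflection `y ↦ 1 - y`
turns its value at `B` into minus its value at `-B - k`. As `∫₀¹ u' = u 1 - u 0 = 0`, this
forces `A = -k/2`. Integrating by parts against `y - 1/2` then reduces `∫₀¹ u` to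
`∫_{-1/2}^{1/2} |t|^r' dt`.
-/
open Real MeasureTheory

open scoped RealInnerProductSpace

open Set intervalIntegral

theorem integral_abs_rpow_symm {a p : ℝ} (ha : 0 ≤ a) (hp : 0 ≤ p) :
    ∫ t in -a..a, |t| ^ p = 2 * (a ^ (p + 1) / (p + 1)) := by
  have hcont : Continuous fun t : ℝ ↦ |t| ^ p := continuous_abs.rpow_const fun _ ↦ Or.inr hp
  have hright : ∫ t in (0:ℝ)..a, |t| ^ p = a ^ (p + 1) / (p + 1) := by
    rw [integral_congr (g := fun t ↦ t ^ p) fun t ht ↦ ?_, integral_rpow (Or.inl (by linarith)),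
      zero_rpow (by linarith), sub_zero]
    rw [uIcc_of_le ha] at ht
    simp only [abs_of_nonneg ht.1]
  have hleft : ∫ t in -a..0, |t| ^ p = ∫ t in (0:ℝ)..a, |t| ^ p := by
    simpa using (integral_comp_neg (a := 0) (b := a) fun t ↦ |t| ^ p).symm
  rw [← integral_add_adjacent_intervals (hcont.intervalIntegrable _ _)
    (hcont.intervalIntegrable _ _), hleft, hright]
  ring

section NormedSpace

variable {E : Type*} [NormedAddCommGroup E] [NormedSpace ℝ E]

theorem norm_rpow_smul_norm_rpow_smul {p p' : ℝ} (hpp' : (p + 1) * (p' + 1) = 1) (v : E) :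
    ‖‖v‖ ^ p • v‖ ^ p' • (‖v‖ ^ p • v) = v := by
  rcases eq_or_ne v 0 with rfl | hv
  · simp
  have hv : 0 < ‖v‖ := norm_pos_iff.mpr hv
  rw [norm_smul, norm_of_nonneg (rpow_nonneg hv.le p), ← rpow_add_one hv.ne', smul_smul,
    ← rpow_mul hv.le, ← rpow_add hv, show (p + 1) * p' + p = (p + 1) * (p' + 1) - 1 by ring,
    hpp', sub_self, rpow_zero, one_smul]

theorem norm_smul_rpow_smul (q c : ℝ) (v : E) :
    ‖c • v‖ ^ q • (c • v) = (|c| ^ q * c) • (‖v‖ ^ q • v) := by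
  rw [norm_smul, norm_eq_abs, mul_rpow (abs_nonneg c) (norm_nonneg v), smul_smul, smul_smul]
  ring_nf

theorem continuous_norm_rpow_smul {q : ℝ} (hq : -1 < q) : Continuous fun v : E ↦ ‖v‖ ^ q • v := by
  refine continuous_iff_continuousAt.mpr fun v ↦ ?_
  rcases eq_or_ne v 0 with rfl | hv
  · rw [ContinuousAt, norm_zero, smul_zero, tendsto_zero_iff_norm_tendsto_zero]
    have hnorm : ∀ w : E, ‖‖w‖ ^ q • w‖ = ‖w‖ ^ (q + 1) := fun w ↦ by
      rw [norm_smul, norm_of_nonneg (rpow_nonneg (norm_nonneg w) q),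
        rpow_add_one' (norm_nonneg w) (by linarith)]
    simp_rw [hnorm]
    simpa [zero_rpow (by linarith : q + 1 ≠ 0)] using
      ((continuous_norm.rpow_const (p := q + 1) fun _ ↦ Or.inr (by linarith)).tendsto (0 : E))
  · exact (continuous_norm.continuousAt.rpow_const (Or.inl (norm_ne_zero_iff.mpr hv))).smul
      continuousAt_id

theorem integral_norm_rpow_smul_add_smul_reflect (q : ℝ) (A k : E) :
    ∫ y in (0:ℝ)..1, ‖(-A - k) + y • k‖ ^ q • ((-A - k) + y • k)
      = -∫ y in (0:ℝ)..1, ‖A + y • k‖ ^ q • (A + y • k) := by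
  have hmirror : ∀ y : ℝ, (-A - k) + y • k = -(A + (1 - y) • k) := fun y ↦ by
    rw [sub_smul, one_smul]; abel
  simp_rw [hmirror, norm_neg, smul_neg, intervalIntegral.integral_neg]
  simpa using integral_comp_sub_left (a := 0) (b := 1) (fun y ↦ ‖A + y • k‖ ^ q • (A + y • k)) 1

theorem exists_eq_add_smul_of_hasDerivAt {f : ℝ → E} {k : E} {s : Set ℝ} (hs : IsOpen s)
    (hs' : IsPreconnected s) (hf : ∀ y ∈ s, HasDerivAt f k y) :
    ∃ A, ∀ y ∈ s, f y = A + y • k := by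
  obtain ⟨A, hA⟩ := hs.exists_eq_add_of_deriv_eq hs'
    (fun y hy ↦ (hf y hy).differentiableAt.differentiableWithinAt)
    (differentiable_id.smul_const k).differentiableOn
    (fun y hy ↦ by rw [(hf y hy).deriv, ((hasDerivAt_id y).smul_const k).deriv, one_smul])
  exact ⟨A, fun y hy ↦ (hA hy).trans (add_comm _ _)⟩

theorem integral_eq_neg_integral_sub_smul_deriv [CompleteSpace E] {u u' : ℝ → E} {a b : ℝ}
    (hu : ∀ x ∈ uIcc a b, HasDerivAt u (u' x) x) (hu' : IntervalIntegrable u' volume a b)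
    (ha : u a = 0) (hb : u b = 0) (c : ℝ) :
    ∫ x in a..b, u x = -∫ x in a..b, (x - c) • u' x := by
  have := integral_smul_deriv_eq_deriv_smul (u := fun x ↦ x - c) (u' := fun _ ↦ (1:ℝ))
    (fun x _ ↦ (hasDerivAt_id x).sub_const c) hu intervalIntegrable_const hu'
  simp only [ha, hb, smul_zero, sub_zero, one_smul, zero_sub] at this
  rw [this, neg_neg]

theorem integral_sub_half_smul_norm_rpow_smul [CompleteSpace E] {q : ℝ} (hq : -1 < q) (k : E) :
    ∫ y in (0:ℝ)..1, (y - 2⁻¹) • (‖(y - 2⁻¹) • k‖ ^ q • ((y - 2⁻¹) • k))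
      = ((2⁻¹ : ℝ) ^ (q + 2) / (q + 3)) • (‖k‖ ^ q • k) := by
  have hpt : ∀ t : ℝ, t • (‖t • k‖ ^ q • (t • k)) = |t| ^ (q + 2) • (‖k‖ ^ q • k) := fun t ↦ by
    rw [norm_smul_rpow_smul, smul_smul, show q + 2 = q + 1 + 1 by ring,
      rpow_add_one' (abs_nonneg t) (by linarith), rpow_add_one' (abs_nonneg t) (by linarith),
      mul_assoc, abs_mul_abs_self, mul_left_comm]
  simp_rw [hpt]
  rw [intervalIntegral.integral_smul_const, integral_comp_sub_right (fun t ↦ |t| ^ (q + 2)),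
    show (0:ℝ) - 2⁻¹ = -2⁻¹ by norm_num, show (1:ℝ) - 2⁻¹ = 2⁻¹ by norm_num,
    integral_abs_rpow_symm (by norm_num) (by linarith), rpow_add_one (by norm_num)]
  congr 1
  ring

end NormedSpace

section InnerProductSpace

variable {E : Type*} [NormedAddCommGroup E] [InnerProductSpace ℝ E]

theorem inner_norm_rpow_smul_sub_pos {q : ℝ} (hq : -1 < q) {a b : E} (hab : a ≠ b) :
    0 < ⟪‖a‖ ^ q • a - ‖b‖ ^ q • b, a - b⟫ := by
  have hexpand : ⟪‖a‖ ^ q • a - ‖b‖ ^ q • b, a - b⟫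
      = (‖a‖ ^ (q + 1) - ‖b‖ ^ (q + 1)) * (‖a‖ - ‖b‖)
        + (‖a‖ ^ q + ‖b‖ ^ q) * (‖a‖ * ‖b‖ - ⟪a, b⟫) := by
    simp only [inner_sub_left, inner_sub_right, real_inner_smul_left,
      real_inner_self_eq_norm_mul_norm, real_inner_comm a b,
      rpow_add_one' (norm_nonneg _) (by linarith : q + 1 ≠ 0)]
    ring
  have hcs : 0 ≤ (‖a‖ ^ q + ‖b‖ ^ q) * (‖a‖ * ‖b‖ - ⟪a, b⟫) :=
    mul_nonneg (by positivity) (sub_nonneg.mpr (real_inner_le_norm a b))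
  rw [hexpand]
  rcases lt_trichotomy ‖a‖ ‖b‖ with h | h | h
  · have := rpow_lt_rpow (norm_nonneg a) h (by linarith : 0 < q + 1)
    nlinarith
  · have hb : 0 < ‖b‖ := by
      refine (norm_nonneg b).lt_of_ne fun h0 ↦ hab ?_
      rw [norm_eq_zero.mp (h.trans h0.symm), norm_eq_zero.mp h0.symm]
    have hstrict : ⟪a, b⟫ < ‖a‖ * ‖b‖ := by
      refine (real_inner_le_norm a b).lt_of_ne fun heq ↦ hab ?_
      have := inner_eq_norm_mul_iff_real.mp heq
      rw [h] at this
      exact smul_right_injective E hb.ne' this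
    rw [h] at hstrict ⊢
    rw [sub_self, zero_mul, zero_add]
    exact mul_pos (by positivity) (sub_pos.mpr hstrict)
  · have := rpow_lt_rpow (norm_nonneg b) h (by linarith : 0 < q + 1)
    nlinarith

end InnerProductSpace

section Profile

variable {E : Type*} [NormedAddCommGroup E] [InnerProductSpace ℝ E] [CompleteSpace E]

theorem integral_norm_rpow_smul_add_smul_injective {q : ℝ} (hq : -1 < q) (k : E) :
    Function.Injective fun A : E ↦ ∫ y in (0:ℝ)..1, ‖A + y • k‖ ^ q • (A + y • k) := by
  intro A B hAB
  simp only at hAB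
  by_contra hne
  set φ : E → ℝ → E := fun C y ↦ ‖C + y • k‖ ^ q • (C + y • k)
  have hcont : ∀ C, Continuous (φ C) := fun C ↦ (continuous_norm_rpow_smul hq).comp
    (continuous_const.add (continuous_id.smul continuous_const))
  have hdiff : Continuous fun y ↦ φ A y - φ B y := (hcont A).sub (hcont B)
  have hpos : 0 < ∫ y in (0:ℝ)..1, innerSL ℝ (A - B) (φ A y - φ B y) := by
    refine intervalIntegral_pos_of_pos_on
      (((innerSL ℝ (A - B)).continuous.comp hdiff).intervalIntegrable 0 1)
      (fun y _ ↦ ?_) zero_lt_one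
    rw [innerSL_apply_apply, real_inner_comm]
    simpa [φ] using inner_norm_rpow_smul_sub_pos hq (a := A + y • k) (b := B + y • k)
      (by simpa using hne)
  rw [(innerSL ℝ (A - B)).intervalIntegral_comp_comm (hdiff.intervalIntegrable 0 1),
    integral_sub ((hcont A).intervalIntegrable 0 1) ((hcont B).intervalIntegrable 0 1)] at hpos
  simp only [φ] at hpos
  rw [hAB, sub_self, map_zero] at hpos
  exact hpos.false

theorem eq_neg_half_smul_of_integral_norm_rpow_smul_eq_zero {q : ℝ} (hq : -1 < q) {A k : E}
    (h : ∫ y in (0:ℝ)..1, ‖A + y • k‖ ^ q • (A + y • k) = 0) : A = -(2⁻¹ : ℝ) • k := by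
  have hmirror : -A - k = A := integral_norm_rpow_smul_add_smul_injective hq k <| by
    simp only [integral_norm_rpow_smul_add_smul_reflect, h, neg_zero]
  linear_combination (norm := module) (-2⁻¹ : ℝ) • hmirror

end Profile

theorem reynolds_coefficient_eq {r r' μ : ℝ} (hr : 1 < r) (hr' : r' = r / (r - 1)) (hμ : 0 < μ) :
    -((2⁻¹ : ℝ) ^ r' / (r' + 1)) *
        (|(-(μ * (2:ℝ) ^ (-(r / 2))))⁻¹| ^ (r' - 2) * (-(μ * (2:ℝ) ^ (-(r / 2))))⁻¹)
      = 1 / ((2:ℝ) ^ (r' / 2) * (r' + 1) * μ ^ (r' - 1)) := by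
  have hr'1 : 1 < r' := by rw [hr', one_lt_div (by linarith)]; linarith
  have habs : |(-(μ * (2:ℝ) ^ (-(r / 2))))⁻¹| = 2 ^ (r / 2) / μ := by
    rw [abs_inv, abs_neg, abs_of_pos (by positivity), rpow_neg zero_le_two, mul_inv, inv_inv,
      inv_mul_eq_div]
  have hsign : (-(μ * (2:ℝ) ^ (-(r / 2))))⁻¹ = -(2 ^ (r / 2) / μ) := by
    rw [← habs, abs_of_neg (by rw [inv_lt_zero, neg_lt_zero]; positivity), neg_neg]
  have hexp : r / 2 * (r' - 1) = r' / 2 := by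
    rw [hr']; field_simp [(by linarith : r - 1 ≠ 0)]; ring
  have hpow : |(-(μ * (2:ℝ) ^ (-(r / 2))))⁻¹| ^ (r' - 2) * (-(μ * (2:ℝ) ^ (-(r / 2))))⁻¹
      = -((2:ℝ) ^ (r' / 2) / μ ^ (r' - 1)) := by
    rw [hsign, abs_neg, abs_of_pos (by positivity), mul_neg,
      ← rpow_add_one' (by positivity) (by linarith : r' - 2 + 1 ≠ 0),
      show r' - 2 + 1 = r' - 1 by ring, div_rpow (by positivity) hμ.le, ← rpow_mul zero_le_two,
      hexp]
  have hhalf : (2⁻¹ : ℝ) ^ r' = ((2:ℝ) ^ (r' / 2) * 2 ^ (r' / 2))⁻¹ := by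
    rw [← rpow_add zero_lt_two, add_halves, inv_rpow zero_le_two]
  have h2 : (0:ℝ) < 2 ^ (r' / 2) := by positivity
  have hμr : 0 < μ ^ (r' - 1) := by positivity
  rw [hpow, hhalf]
  field_simp

theorem reynolds_average_velocity_general (r r' μ : ℝ) (hr1 : 1 < r)
    (hr' : r' = r / (r - 1)) (hμ : 0 < μ)
    (g : EuclideanSpace ℝ (Fin 2))
    (u : ℝ → EuclideanSpace ℝ (Fin 2)) (hu : ContDiff ℝ 1 u)
    (hflux : ∀ y ∈ Set.Ioo (0:ℝ) 1,
      HasDerivAt (fun t => ‖deriv u t‖ ^ (r - 2) • deriv u t)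
        ((-(μ * (2:ℝ) ^ (-(r / 2))))⁻¹ • g) y)
    (hu0 : u 0 = 0) (hu1 : u 1 = 0) :
    ∫ y in (0:ℝ)..1, u y
      = (1 / ((2:ℝ) ^ (r' / 2) * (r' + 1) * μ ^ (r' - 1))) •
          (‖g‖ ^ (r' - 2) • g) := by
  set k := (-(μ * (2:ℝ) ^ (-(r / 2))))⁻¹ • g
  have hconj : (r - 2 + 1) * (r' - 2 + 1) = 1 := by
    rw [hr']; field_simp [(by linarith : r - 1 ≠ 0)]; ring
  have hq : -1 < r' - 2 := by
    rw [hr', lt_sub_iff_add_lt, lt_div_iff₀ (by linarith)]; linarith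
  have hderiv : ∀ x, HasDerivAt u (deriv u x) x := fun x ↦
    (hu.differentiable one_ne_zero x).hasDerivAt
  obtain ⟨A, hA⟩ := exists_eq_add_smul_of_hasDerivAt isOpen_Ioo isPreconnected_Ioo hflux
  have hv : EqOn (deriv u) (fun y ↦ ‖A + y • k‖ ^ (r' - 2) • (A + y • k)) (Ioo 0 1) :=
    fun y hy ↦ by rw [← norm_rpow_smul_norm_rpow_smul hconj (deriv u y), hA y hy]
  have hA_eq : A = -(2⁻¹ : ℝ) • k := eq_neg_half_smul_of_integral_norm_rpow_smul_eq_zero hq <| by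
    rw [← integral_congr_Ioo_of_le zero_le_one hv,
      integral_deriv_eq_sub (fun x _ ↦ (hderiv x).differentiableAt)
        ((hu.continuous_deriv le_rfl).intervalIntegrable 0 1), hu0, hu1, sub_zero]
  calc ∫ y in (0:ℝ)..1, u y = -∫ y in (0:ℝ)..1, (y - 2⁻¹) • deriv u y :=
        integral_eq_neg_integral_sub_smul_deriv (fun x _ ↦ hderiv x)
          ((hu.continuous_deriv le_rfl).intervalIntegrable 0 1) hu0 hu1 2⁻¹
    _ = -∫ y in (0:ℝ)..1, (y - 2⁻¹) • (‖(y - 2⁻¹) • k‖ ^ (r' - 2) • ((y - 2⁻¹) • k)) := by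
        have hcentre : ∀ y : ℝ, -(2⁻¹ : ℝ) • k + y • k = (y - 2⁻¹) • k := fun y ↦ by
          rw [sub_smul, neg_smul, neg_add_eq_sub]
        refine congrArg _ (integral_congr_Ioo_of_le zero_le_one fun y hy ↦ ?_)
        simp only [hv hy, hA_eq, hcentre]
    _ = _ := by
        rw [integral_sub_half_smul_norm_rpow_smul hq, norm_smul_rpow_smul, smul_smul, ← neg_smul,
          show r' - 2 + 2 = r' by ring, show r' - 2 + 3 = r' + 1 by ring,
          ← neg_mul, reynolds_coefficient_eq hr1 hr' hμ]

/-- Derivation of the nonlinear Reynolds average velocity formula: if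
`u' : [0,1] → ℝ²` is `C¹`, vanishes at `0` and `1`, and the flux
`|∂_{y₃}u'|^{r-2}∂_{y₃}u'` has constant derivative `−g/(μ2^{-r/2})` on `(0,1)`
(i.e. `−μ2^{-r/2}∂_{y₃}(|∂_{y₃}u'|^{r-2}∂_{y₃}u') = g`), then
`∫₀¹ u' = (1/(2^{r'/2}(r'+1)μ^{r'-1}))|g|^{r'-2}g` where `r' = r/(r-1)`. -/
theorem reynolds_average_velocity (r r' μ : ℝ) (hr1 : 1 < r) (hr2 : r < 2)
    (hr' : r' = r / (r - 1)) (hμ : 0 < μ)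
    (g : EuclideanSpace ℝ (Fin 2))
    (u : ℝ → EuclideanSpace ℝ (Fin 2)) (hu : ContDiff ℝ 1 u)
    (hflux : ∀ y ∈ Set.Ioo (0:ℝ) 1,
      HasDerivAt (fun t => ‖deriv u t‖ ^ (r - 2) • deriv u t)
        ((-(μ * (2:ℝ) ^ (-(r / 2))))⁻¹ • g) y)
    (hu0 : u 0 = 0) (hu1 : u 1 = 0) :
    ∫ y in (0:ℝ)..1, u y
      = (1 / ((2:ℝ) ^ (r' / 2) * (r' + 1) * μ ^ (r' - 1))) •
          (‖g‖ ^ (r' - 2) • g) :=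
  reynolds_average_velocity_general r r' μ hr1 hr' hμ g u hu hflux hu0 hu1
end
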